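/- For natural numbers r, s ≥ 2, ζ(r)ζ(s) = ζ(r,s) + ζ(r+s) + ζ(s,r) (the stuffle relation for depth-one zeta values). -/
import Mathlib


open scoped BigOperators

/-- Riemann zeta value `ζ(n) = ∑_{m ≥ 1} 1/m^n`. -/
noncomputable def rzeta (n : ℕ) : ℝ := ∑' m : ℕ, 1 / ((m : ℝ) + 1) ^ n

/-- Double zeta value `ζ(r,s) = ∑_{j > k ≥ 1} 1/(j^r k^s)`. -/
noncomputable def dzeta (r s : ℕ) : ℝ :=
  ∑' p : {q : ℕ × ℕ // q.2 < q.1 ∧ 0 < q.2},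
    1 / (((p : ℕ × ℕ).1 : ℝ) ^ r * ((p : ℕ × ℕ).2 : ℝ) ^ s)

lemma summable_shift (n : ℕ) (hn : 2 ≤ n) :
    Summable (fun m : ℕ => 1 / ((m : ℝ) + 1) ^ n) := by
  have h := (Real.summable_one_div_nat_pow (p := n)).2 hn
  have h2 := (summable_nat_add_iff 1).2 h
  exact h2.congr fun m => by push_cast; ring

def eGT : {q : ℕ × ℕ // q.2 < q.1 ∧ 0 < q.2} ≃ {p : ℕ × ℕ // p.2 < p.1} where
  toFun q := ⟨(q.1.1 - 1, q.1.2 - 1), by have h := q.2; show q.1.2 - 1 < q.1.1 - 1; omega⟩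
  invFun p := ⟨(p.1.1 + 1, p.1.2 + 1), by
    have h := p.2
    exact ⟨by show p.1.2 + 1 < p.1.1 + 1; omega, Nat.succ_pos _⟩⟩
  left_inv q := by
    have h := q.2
    apply Subtype.ext
    apply Prod.ext <;> simp <;> omega
  right_inv p := by
    apply Subtype.ext
    apply Prod.ext <;> simp

def eLT : {q : ℕ × ℕ // q.2 < q.1 ∧ 0 < q.2} ≃ {p : ℕ × ℕ // p.1 < p.2} where
  toFun q := ⟨(q.1.2 - 1, q.1.1 - 1), by have h := q.2; show q.1.2 - 1 < q.1.1 - 1; omega⟩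
  invFun p := ⟨(p.1.2 + 1, p.1.1 + 1), by
    have h := p.2
    exact ⟨by show p.1.1 + 1 < p.1.2 + 1; omega, Nat.succ_pos _⟩⟩
  left_inv q := by
    have h := q.2
    apply Subtype.ext
    apply Prod.ext <;> simp <;> omega
  right_inv p := by
    apply Subtype.ext
    apply Prod.ext <;> simp

def eDiag : ℕ ≃ {p : ℕ × ℕ // p.1 = p.2} where
  toFun n := ⟨(n, n), rfl⟩
  invFun p := p.1.1
  left_inv n := rfl
  right_inv p := by
    have h := p.2
    apply Subtype.ext
    apply Prod.ext
    · rfl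
    · exact h

lemma tsumGT (r s : ℕ) :
    (∑' p : {p : ℕ × ℕ // p.2 < p.1},
      1 / (((p : ℕ × ℕ).1 : ℝ) + 1) ^ r * (1 / (((p : ℕ × ℕ).2 : ℝ) + 1) ^ s)) = dzeta r s := by
  rw [dzeta, ← Equiv.tsum_eq eGT]
  apply tsum_congr
  rintro ⟨⟨j, k⟩, hjk, hk⟩
  simp only [eGT, Equiv.coe_fn_mk]
  have cj : ((j - 1 : ℕ) : ℝ) + 1 = (j : ℝ) := by rw [Nat.cast_sub (by omega)]; ring
  have ck : ((k - 1 : ℕ) : ℝ) + 1 = (k : ℝ) := by rw [Nat.cast_sub (by omega)]; ring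
  rw [cj, ck]; ring

lemma tsumLT (r s : ℕ) :
    (∑' p : {p : ℕ × ℕ // p.1 < p.2},
      1 / (((p : ℕ × ℕ).1 : ℝ) + 1) ^ r * (1 / (((p : ℕ × ℕ).2 : ℝ) + 1) ^ s)) = dzeta s r := by
  rw [dzeta, ← Equiv.tsum_eq eLT]
  apply tsum_congr
  rintro ⟨⟨j, k⟩, hjk, hk⟩
  simp only [eLT, Equiv.coe_fn_mk]
  have cj : ((j - 1 : ℕ) : ℝ) + 1 = (j : ℝ) := by rw [Nat.cast_sub (by omega)]; ring
  have ck : ((k - 1 : ℕ) : ℝ) + 1 = (k : ℝ) := by rw [Nat.cast_sub (by omega)]; ring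
  rw [cj, ck]; ring

lemma tsumDiag (r s : ℕ) :
    (∑' p : {p : ℕ × ℕ // p.1 = p.2},
      1 / (((p : ℕ × ℕ).1 : ℝ) + 1) ^ r * (1 / (((p : ℕ × ℕ).2 : ℝ) + 1) ^ s)) = rzeta (r + s) := by
  rw [rzeta, ← Equiv.tsum_eq eDiag]
  apply tsum_congr
  intro n
  simp only [eDiag, Equiv.coe_fn_mk]
  rw [pow_add]; ring

set_option maxHeartbeats 1000000 in
/-- The stuffle relation `ζ(r)ζ(s) = ζ(r,s) + ζ(r+s) + ζ(s,r)` for `r, s ≥ 2`. -/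

theorem stuffle_depth_one (r s : ℕ) (hr : 2 ≤ r) (hs : 2 ≤ s) :
    rzeta r * rzeta s = dzeta r s + rzeta (r + s) + dzeta s r := by
  have hr' := summable_shift r hr
  have hs' := summable_shift s hs
  have hFsum : Summable (fun p : ℕ × ℕ =>
      1 / ((p.1 : ℝ) + 1) ^ r * (1 / ((p.2 : ℝ) + 1) ^ s)) :=
    hr'.mul_of_nonneg hs' (fun m => by positivity) (fun m => by positivity)
  have hprod : rzeta r * rzeta s = ∑' p : ℕ × ℕ,
      1 / ((p.1 : ℝ) + 1) ^ r * (1 / ((p.2 : ℝ) + 1) ^ s) := by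
    rw [rzeta, rzeta]
    exact Summable.tsum_mul_tsum hr' hs' hFsum
  set F : ℕ × ℕ → ℝ := fun p => 1 / ((p.1 : ℝ) + 1) ^ r * (1 / ((p.2 : ℝ) + 1) ^ s) with hFdef
  have hdecomp : ∀ p : ℕ × ℕ, F p =
      Set.indicator {p : ℕ × ℕ | p.2 < p.1} F p +
        Set.indicator {p : ℕ × ℕ | p.1 = p.2} F p +
        Set.indicator {p : ℕ × ℕ | p.1 < p.2} F p := by
    intro p
    rcases lt_trichotomy p.2 p.1 with h | h | h
    · rw [Set.indicator_of_mem (show p ∈ {p : ℕ × ℕ | p.2 < p.1} from h),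
        Set.indicator_of_notMem (show p ∉ {p : ℕ × ℕ | p.1 = p.2} by simp only [Set.mem_setOf_eq]; omega),
        Set.indicator_of_notMem (show p ∉ {p : ℕ × ℕ | p.1 < p.2} by simp only [Set.mem_setOf_eq]; omega)]
      ring
    · rw [Set.indicator_of_notMem (show p ∉ {p : ℕ × ℕ | p.2 < p.1} by simp only [Set.mem_setOf_eq]; omega),
        Set.indicator_of_mem (show p ∈ {p : ℕ × ℕ | p.1 = p.2} by simp only [Set.mem_setOf_eq]; omega),
        Set.indicator_of_notMem (show p ∉ {p : ℕ × ℕ | p.1 < p.2} by simp only [Set.mem_setOf_eq]; omega)]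
      ring
    · rw [Set.indicator_of_notMem (show p ∉ {p : ℕ × ℕ | p.2 < p.1} by simp only [Set.mem_setOf_eq]; omega),
        Set.indicator_of_notMem (show p ∉ {p : ℕ × ℕ | p.1 = p.2} by simp only [Set.mem_setOf_eq]; omega),
        Set.indicator_of_mem (show p ∈ {p : ℕ × ℕ | p.1 < p.2} from h)]
      ring
  have hsplit : (∑' p : ℕ × ℕ, F p) =
      (∑' p : {p : ℕ × ℕ | p.2 < p.1}, F p) +
        (∑' p : {p : ℕ × ℕ | p.1 = p.2}, F p) +
        (∑' p : {p : ℕ × ℕ | p.1 < p.2}, F p) := by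
    rw [tsum_subtype, tsum_subtype, tsum_subtype]
    calc (∑' p : ℕ × ℕ, F p)
        = ∑' p : ℕ × ℕ, (Set.indicator {p : ℕ × ℕ | p.2 < p.1} F p +
            Set.indicator {p : ℕ × ℕ | p.1 = p.2} F p +
            Set.indicator {p : ℕ × ℕ | p.1 < p.2} F p) := tsum_congr hdecomp
      _ = _ := by
          rw [Summable.tsum_add ((hFsum.indicator _).add (hFsum.indicator _)) (hFsum.indicator _),
            Summable.tsum_add (hFsum.indicator _) (hFsum.indicator _)]
  rw [hprod]
  rw [show (∑' p : ℕ × ℕ, 1 / ((p.1 : ℝ) + 1) ^ r * (1 / ((p.2 : ℝ) + 1) ^ s)) = ∑' p : ℕ × ℕ, F p from rfl]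
  rw [hsplit]
  have h1 : (∑' p : {p : ℕ × ℕ | p.2 < p.1}, F p) = dzeta r s := by
    rw [hFdef]; exact tsumGT r s
  have h2 : (∑' p : {p : ℕ × ℕ | p.1 = p.2}, F p) = rzeta (r + s) := by
    rw [hFdef]; exact tsumDiag r s
  have h3 : (∑' p : {p : ℕ × ℕ | p.1 < p.2}, F p) = dzeta s r := by
    rw [hFdef]; exact tsumLT r s
  rw [h1, h2, h3]
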